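/- arXiv:1311.3955 — 2 statements merged into one kernel-verified Lean document; each statement's English description precedes it below -/
import Mathlib

section
/- For a semigroup S, the property of having rational word problem is independent of the choice of finite generating set: if ι(S,A) is rational for some finite generating set A of S, then ι(S,B) is rational for every finite generating set B of S. -/
/-- The monoid homomorphism `(A ⊕ A)* → A* × A*` sending `inl a ↦ (a, ε)` and
`inr a ↦ (ε, a)`, used to define rational (asynchronous two-tape) relations. -/
def twoTapeHom (A : Type) : FreeMonoid (A ⊕ A) →* FreeMonoid A × FreeMonoid A :=
  FreeMonoid.lift (Sum.elim (fun a => (FreeMonoid.of a, 1)) (fun a => (1, FreeMonoid.of a)))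

/-- A relation `R ⊆ A* × A*` is rational if it is the image of a regular language
over the alphabet `A ⊕ A` under `twoTapeHom`; equivalently, it is recognised by a
two-tape asynchronous finite automaton. -/
def IsRationalRel {A : Type} (R : Set (FreeMonoid A × FreeMonoid A)) : Prop :=
  ∃ L : Language (A ⊕ A), L.IsRegular ∧
    twoTapeHom A '' {w : FreeMonoid (A ⊕ A) | w.toList ∈ L} = R

/-- The canonical embedding of the free semigroup `A⁺` into the free monoid `A*`. -/
def freeSemigroupToWord {A : Type} : FreeSemigroup A →ₙ* FreeMonoid A :=
  FreeSemigroup.lift FreeMonoid.of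

/-- The two-tape word problem `ι(S,A)` of a semigroup `S` with respect to a
(generating) map `f : A → S`: all pairs of nonempty words over `A` whose images
in `S` coincide, viewed as a relation on words in `A*`. -/
def wordProblem {A S : Type} [Semigroup S] (f : A → S) :
    Set (FreeMonoid A × FreeMonoid A) :=
  {p | ∃ w₁ w₂ : FreeSemigroup A,
        FreeSemigroup.lift f w₁ = FreeSemigroup.lift f w₂ ∧
        p = (freeSemigroupToWord w₁, freeSemigroupToWord w₂)}

/-- A semigroup has rational word problem if it is generated by some finite set `A`
(i.e. there is `f : A → S` with the induced homomorphism `A⁺ → S` surjective) for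
which the two-tape word problem is a rational relation. -/
def HasRationalWordProblem (S : Type) [Semigroup S] : Prop :=
  ∃ (A : Type) (_ : Fintype A) (f : A → S),
    Function.Surjective ⇑(FreeSemigroup.lift f) ∧ IsRationalRel (wordProblem f)


/-!
If `S` is generated by `f : A → S` and `g : B → S`, choose for each `b` a nonempty word `u b`
over `A` with the same value as `g b`; then `ι(S,B)` is the preimage of `ι(S,A)` under the
substitution `b ↦ u b` applied to both tapes. Rational relations are closed under such inverse
substitutions: read a run of the automaton for `ι(S,A)` interleaved with markers `b` announcing
each block `u b` on either tape; the markers are recovered by letter-to-letter projections, and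
regular languages are closed under intersection, inverse homomorphisms and erasing projections.
-/

open Sum

namespace Language

variable {α β : Type}

theorem IsRegular.preimage_flatMap {L : Language β} (hL : L.IsRegular) (φ : α → List β) :
    IsRegular ({w | w.flatMap φ ∈ L} : Language α) := by
  obtain ⟨σ, _, M, rfl⟩ := hL
  let N : DFA α σ := ⟨fun s a => M.evalFrom s (φ a), M.start, M.accept⟩
  have hN : ∀ w s, N.evalFrom s w = M.evalFrom s (w.flatMap φ) := by
    intro w
    induction w with
    | nil => intro s; rfl
    | cons a w ih => intro s; rw [DFA.evalFrom_cons, ih, List.flatMap_cons, DFA.evalFrom_of_append]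
  refine ⟨σ, inferInstance, N, Set.ext fun w => ?_⟩
  change N.evalFrom M.start w ∈ M.accept ↔ _
  rw [hN]
  rfl

theorem IsRegular.preimage_filterMap {L : Language β} (hL : L.IsRegular) (q : α → Option β) :
    IsRegular ({w | w.filterMap q ∈ L} : Language α) := by
  simpa only [List.filterMap_eq_flatMap_toList] using hL.preimage_flatMap fun a => (q a).toList

theorem IsRegular.image_filterMap {L : Language α} (hL : L.IsRegular) (q : α → Option β) :
    IsRegular (List.filterMap q '' L) := by
  obtain ⟨σ, _, M, rfl⟩ := hL
  let reach (s : σ) (w : List β) : Set σ := M.evalFrom s '' {z | z.filterMap q = w}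
  have reach_append : ∀ s w w', reach s (w ++ w') = ⋃ t ∈ reach s w, reach t w' := by
    intro s w w'
    ext t
    simp only [reach, Set.mem_image, Set.mem_iUnion, Set.mem_ofPred_eq, exists_prop]
    constructor
    · rintro ⟨z, hz, rfl⟩
      obtain ⟨z₁, z₂, rfl, h₁, h₂⟩ := List.filterMap_eq_append_iff.mp hz
      exact ⟨_, ⟨z₁, h₁, rfl⟩, z₂, h₂, (DFA.evalFrom_of_append _ _ _ _).symm⟩
    · rintro ⟨_, ⟨z₁, h₁, rfl⟩, z₂, h₂, rfl⟩
      exact ⟨z₁ ++ z₂, by rw [List.filterMap_append, h₁, h₂], DFA.evalFrom_of_append _ _ _ _⟩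
  -- Erased letters are absorbed into the start set and into each transition.
  let N : NFA β σ := ⟨fun s b => reach s [b], reach M.start [], M.accept⟩
  have hN : ∀ w, N.evalFrom N.start w = reach M.start w := by
    intro w
    induction w using List.reverseRecOn with
    | nil => rfl
    | append_singleton w b ih =>
      ext t
      rw [NFA.evalFrom_append, ih, NFA.evalFrom_singleton, reach_append]
      simp [NFA.mem_stepSet, N]
  refine ⟨Set σ, inferInstance, N.toDFA, ?_⟩
  rw [NFA.toDFA_correct]
  ext w
  simp only [NFA.mem_accepts, hN, reach]
  constructor
  · rintro ⟨_, hacc, z, hz, rfl⟩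
    exact ⟨z, hacc, hz⟩
  · rintro ⟨z, hacc, hz⟩
    exact ⟨_, hacc, z, hz, rfl⟩

end Language

theorem DFA.isRegular_accepts_of_invariant {α σ : Type} (M : DFA α σ) (S : Set σ)
    (hS : S.Finite) (hstart : M.start ∈ S) (hstep : ∀ s ∈ S, ∀ a, M.step s a ∈ S) :
    M.accepts.IsRegular := by
  have := hS.fintype
  let N : DFA α S :=
    ⟨fun s a => ⟨M.step s a, hstep s s.2 a⟩, ⟨M.start, hstart⟩, {s | s.1 ∈ M.accept}⟩
  have hN : ∀ w (s : S), (N.evalFrom s w).1 = M.evalFrom s w := by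
    intro w
    induction w with
    | nil => intro s; rfl
    | cons a w ih => intro s; exact ih _
  exact ⟨S, inferInstance, N, Set.ext fun w => by
    change (N.evalFrom N.start w).1 ∈ M.accept ↔ _; rw [hN]; rfl⟩

section BlockCode

variable {A B : Type}

def blockCode (u : B → List A) (bs : List B) : List (A ⊕ B) :=
  bs.flatMap fun b => inr b :: (u b).map inl

@[simp]
theorem blockCode_nil (u : B → List A) : blockCode u [] = [] := rfl

@[simp]
theorem blockCode_cons (u : B → List A) (b : B) (bs : List B) :
    blockCode u (b :: bs) = inr b :: ((u b).map inl ++ blockCode u bs) := rfl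

@[simp]
theorem filterMap_getLeft?_blockCode (u : B → List A) (bs : List B) :
    (blockCode u bs).filterMap getLeft? = bs.flatMap u := by
  induction bs with
  | nil => rfl
  | cons b bs ih => simp [List.filterMap_cons, ih, List.filterMap_map, Function.comp_def]

@[simp]
theorem filterMap_getRight?_blockCode (u : B → List A) (bs : List B) :
    (blockCode u bs).filterMap getRight? = bs := by
  induction bs with
  | nil => rfl
  | cons b bs ih => simp [ih, List.filterMap_map, Function.comp_def]

/-- Reads a block code; the state `some r` means that the letters `r` of the current block are
still expected, and `none` is a dead state. -/
def blockCodeDFA [DecidableEq A] (u : B → List A) : DFA (A ⊕ B) (Option (List A)) where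
  step
    | some [], inr b => some (u b)
    | some (a :: r), inl a' => if a' = a then some r else none
    | _, _ => none
  start := some []
  accept := {some []}

theorem blockCodeDFA_evalFrom_none [DecidableEq A] (u : B → List A) (w : List (A ⊕ B)) :
    (blockCodeDFA u).evalFrom none w = none := by
  induction w with
  | nil => rfl
  | cons c w ih => cases c <;> exact ih

theorem blockCodeDFA_evalFrom_eq_some_nil [DecidableEq A] (u : B → List A) (w : List (A ⊕ B))
    (r : List A) :
    (blockCodeDFA u).evalFrom (some r) w = some [] ↔ ∃ bs, w = r.map inl ++ blockCode u bs := by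
  induction w generalizing r with
  | nil =>
    constructor
    · rintro ⟨⟩
      exact ⟨[], rfl⟩
    · rintro ⟨_ | ⟨b, bs⟩, h⟩ <;> cases r <;> simp_all
  | cons c w ih =>
    rw [DFA.evalFrom_cons]
    rcases r with _ | ⟨a, r⟩ <;> rcases c with a' | b
    · change (blockCodeDFA u).evalFrom none w = _ ↔ _
      simp only [blockCodeDFA_evalFrom_none, reduceCtorEq, false_iff, not_exists]
      rintro (_ | ⟨b, bs⟩) <;> simp
    · change (blockCodeDFA u).evalFrom (some (u b)) w = _ ↔ _
      rw [ih]
      constructor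
      · rintro ⟨bs, rfl⟩
        exact ⟨b :: bs, rfl⟩
      · rintro ⟨_ | ⟨b', bs⟩, h⟩ <;> simp only [blockCode_cons, blockCode_nil] at h
        · simp at h
        · simp_all
    · by_cases h : a' = a
      · subst h
        change (blockCodeDFA u).evalFrom (if a' = a' then some r else none) w = _ ↔ _
        simp [ih]
      · change (blockCodeDFA u).evalFrom (if a' = a then some r else none) w = _ ↔ _
        simp [h, blockCodeDFA_evalFrom_none]
    · change (blockCodeDFA u).evalFrom none w = _ ↔ _
      simp [blockCodeDFA_evalFrom_none]

theorem isRegular_range_blockCode [Finite B] (u : B → List A) :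
    Language.IsRegular (Set.range (blockCode u)) := by
  classical
  have hK : Set.range (blockCode u) = (blockCodeDFA u).accepts := by
    ext w
    change w ∈ Set.range _ ↔ (blockCodeDFA u).evalFrom (some []) w = some []
    rw [blockCodeDFA_evalFrom_eq_some_nil, Set.mem_range, List.map_nil]
    exact exists_congr fun _ => eq_comm
  rw [hK]
  have hsuffix : ∀ b, some (u b) ∈ some '' ⋃ b, {r | r <:+ u b} :=
    fun b => ⟨u b, Set.mem_iUnion.2 ⟨b, List.suffix_refl _⟩, rfl⟩
  refine (blockCodeDFA u).isRegular_accepts_of_invariant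
    (insert none (insert (some []) (some '' ⋃ b, {r | r <:+ u b}))) ?_ (Or.inr (Or.inl rfl)) ?_
  · refine ((Set.finite_iUnion fun b => ?_).image _).insert _ |>.insert _
    simpa only [List.mem_tails] using (u b).tails.finite_toSet
  · rintro s (rfl | rfl | ⟨_ | ⟨a, r⟩, hr, rfl⟩) (a' | b)
    any_goals exact Or.inl rfl
    · exact Or.inr (Or.inr (hsuffix b))
    · exact Or.inr (Or.inr (hsuffix b))
    · change (if a' = a then some r else none) ∈ _
      split_ifs
      · obtain ⟨b, hb⟩ := Set.mem_iUnion.1 hr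
        exact Or.inr (Or.inr ⟨r, Set.mem_iUnion.2 ⟨b, (List.suffix_cons a r).trans hb⟩, rfl⟩)
      · exact Or.inl rfl

end BlockCode

section Tracks

variable {A₁ A₂ B₁ B₂ : Type}

def leftTrack : (A₁ ⊕ A₂) ⊕ (B₁ ⊕ B₂) → Option (A₁ ⊕ B₁)
  | inl (inl a) => some (inl a)
  | inl (inr _) => none
  | inr (inl b) => some (inr b)
  | inr (inr _) => none

def rightTrack : (A₁ ⊕ A₂) ⊕ (B₁ ⊕ B₂) → Option (A₂ ⊕ B₂)
  | inl (inl _) => none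
  | inl (inr a) => some (inl a)
  | inr (inl _) => none
  | inr (inr b) => some (inr b)

variable (d : List ((A₁ ⊕ A₂) ⊕ (B₁ ⊕ B₂)))

theorem filterMap_getLeft?_leftTrack :
    (d.filterMap leftTrack).filterMap getLeft? = (d.filterMap getLeft?).filterMap getLeft? := by
  simp only [List.filterMap_filterMap]
  congr 1
  funext c
  rcases c with (_ | _) | (_ | _) <;> rfl

theorem filterMap_getRight?_leftTrack :
    (d.filterMap leftTrack).filterMap getRight? = (d.filterMap getRight?).filterMap getLeft? := by
  simp only [List.filterMap_filterMap]
  congr 1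
  funext c
  rcases c with (_ | _) | (_ | _) <;> rfl

theorem filterMap_getLeft?_rightTrack :
    (d.filterMap rightTrack).filterMap getLeft? = (d.filterMap getLeft?).filterMap getRight? := by
  simp only [List.filterMap_filterMap]
  congr 1
  funext c
  rcases c with (_ | _) | (_ | _) <;> rfl

theorem filterMap_getRight?_rightTrack :
    (d.filterMap rightTrack).filterMap getRight? = (d.filterMap getRight?).filterMap getRight? := by
  simp only [List.filterMap_filterMap]
  congr 1
  funext c
  rcases c with (_ | _) | (_ | _) <;> rfl

omit d

theorem exists_interleave : ∀ (v : List (A₁ ⊕ A₂)) (e₁ : List (A₁ ⊕ B₁)) (e₂ : List (A₂ ⊕ B₂)),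
    e₁.filterMap getLeft? = v.filterMap getLeft? → e₂.filterMap getLeft? = v.filterMap getRight? →
    ∃ d : List ((A₁ ⊕ A₂) ⊕ (B₁ ⊕ B₂)),
      d.filterMap getLeft? = v ∧ d.filterMap leftTrack = e₁ ∧ d.filterMap rightTrack = e₂
  | v, inr b :: e₁, e₂, h₁, h₂ => by
    obtain ⟨d, hv, hd₁, hd₂⟩ :=
      exists_interleave v e₁ e₂ (by simpa [List.filterMap_cons] using h₁) h₂
    exact ⟨inr (inl b) :: d, by simp [List.filterMap_cons, hv, hd₁, hd₂, leftTrack, rightTrack]⟩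
  | v, e₁, inr b :: e₂, h₁, h₂ => by
    obtain ⟨d, hv, hd₁, hd₂⟩ :=
      exists_interleave v e₁ e₂ h₁ (by simpa [List.filterMap_cons] using h₂)
    exact ⟨inr (inr b) :: d, by simp [List.filterMap_cons, hv, hd₁, hd₂, leftTrack, rightTrack]⟩
  | inl a :: v, inl a' :: e₁, e₂, h₁, h₂ => by
    simp only [List.filterMap_cons, getLeft?_inl, getRight?_inl, List.cons.injEq] at h₁ h₂
    obtain ⟨rfl, h₁⟩ := h₁
    obtain ⟨d, hv, hd₁, hd₂⟩ := exists_interleave v e₁ e₂ h₁ h₂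
    exact ⟨inl (inl a') :: d, by simp [List.filterMap_cons, hv, hd₁, hd₂, leftTrack, rightTrack]⟩
  | inr a :: v, e₁, inl a' :: e₂, h₁, h₂ => by
    simp only [List.filterMap_cons, getLeft?_inl, getRight?_inr, getLeft?_inr, List.cons.injEq]
      at h₁ h₂
    obtain ⟨rfl, h₂⟩ := h₂
    obtain ⟨d, hv, hd₁, hd₂⟩ := exists_interleave v e₁ e₂ h₁ h₂
    exact ⟨inl (inr a') :: d, by simp [List.filterMap_cons, hv, hd₁, hd₂, leftTrack, rightTrack]⟩
  | [], [], [], _, _ => ⟨[], rfl, rfl, rfl⟩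
  | [], inl _ :: _, _, h₁, _ | inl _ :: _, [], _, h₁, _ => by simp at h₁
  | [], [], inl _ :: _, _, h₂ | inr _ :: _, _, [], _, h₂ => by simp at h₂
termination_by v e₁ e₂ => v.length + e₁.length + e₂.length

end Tracks

theorem FreeMonoid.toList_hom_apply {A B : Type} (φ : FreeMonoid B →* FreeMonoid A)
    (x : FreeMonoid B) : (φ x).toList = x.toList.flatMap fun b => (φ (of b)).toList := by
  induction x using FreeMonoid.inductionOn' with
  | one => rw [map_one]; rfl
  | of_mul b x ih => rw [map_mul, toList_mul, ih]; rfl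

theorem twoTapeHom_apply {A : Type} (w : FreeMonoid (A ⊕ A)) :
    twoTapeHom A w =
      (.ofList (w.toList.filterMap getLeft?), .ofList (w.toList.filterMap getRight?)) := by
  induction w using FreeMonoid.inductionOn' with
  | one => rw [map_one]; rfl
  | of_mul c w ih =>
    rw [map_mul, ih]
    cases c <;> rfl

theorem mem_image_twoTapeHom_iff {A : Type} {L : Language (A ⊕ A)} {x y : FreeMonoid A} :
    (x, y) ∈ twoTapeHom A '' {w | w.toList ∈ L} ↔
      ∃ v ∈ L, v.filterMap getLeft? = x.toList ∧ v.filterMap getRight? = y.toList := by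
  constructor
  · rintro ⟨w, hw, hxy⟩
    rw [twoTapeHom_apply, Prod.mk.injEq] at hxy
    exact ⟨w.toList, hw, hxy.1 ▸ rfl, hxy.2 ▸ rfl⟩
  · rintro ⟨v, hv, hx, hy⟩
    refine ⟨.ofList v, hv, ?_⟩
    rw [twoTapeHom_apply, FreeMonoid.toList_ofList, hx, hy]
    rfl

theorem IsRationalRel.preimage_prodMap {A B : Type} [Finite B]
    {R : Set (FreeMonoid A × FreeMonoid A)} (hR : IsRationalRel R)
    (φ : FreeMonoid B →* FreeMonoid A) : IsRationalRel (Prod.map φ φ ⁻¹' R) := by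
  obtain ⟨L, hL, rfl⟩ := hR
  let u : B → List A := fun b => (φ (.of b)).toList
  let K : Language (A ⊕ B) := Set.range (blockCode u)
  have hK : K.IsRegular := isRegular_range_blockCode u
  -- A word of `D` is a run on `L` in which the letters of each tape are grouped into the
  -- blocks `u b`, each block preceded by a marker `b`; the markers spell out the words over `B`.
  let D : Language ((A ⊕ A) ⊕ (B ⊕ B)) := {d | d.filterMap getLeft? ∈ L} ⊓
    {d | d.filterMap leftTrack ∈ K} ⊓ {d | d.filterMap rightTrack ∈ K}
  have hD : D.IsRegular := ((hL.preimage_filterMap _).inf (hK.preimage_filterMap _)).inf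
    (hK.preimage_filterMap _)
  let L' : Language (B ⊕ B) := List.filterMap getRight? '' D
  refine ⟨L', hD.image_filterMap _, ?_⟩
  ext ⟨x, y⟩
  rw [Set.mem_preimage, Prod.map, mem_image_twoTapeHom_iff, mem_image_twoTapeHom_iff,
    FreeMonoid.toList_hom_apply, FreeMonoid.toList_hom_apply]
  constructor
  · rintro ⟨_, ⟨d, ⟨⟨hdL, bs₁, hd₁⟩, bs₂, hd₂⟩, rfl⟩, rfl, rfl⟩
    refine ⟨d.filterMap getLeft?, hdL, ?_, ?_⟩
    · rw [← filterMap_getLeft?_leftTrack, ← filterMap_getRight?_leftTrack, ← hd₁,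
        filterMap_getLeft?_blockCode, filterMap_getRight?_blockCode]
      rfl
    · rw [← filterMap_getLeft?_rightTrack, ← filterMap_getRight?_rightTrack, ← hd₂,
        filterMap_getLeft?_blockCode, filterMap_getRight?_blockCode]
      rfl
  · rintro ⟨v, hv, hx, hy⟩
    obtain ⟨d, rfl, hd₁, hd₂⟩ := exists_interleave v (blockCode u x.toList)
      (blockCode u y.toList) (by rw [filterMap_getLeft?_blockCode, hx])
      (by rw [filterMap_getLeft?_blockCode, hy])
    refine ⟨d.filterMap getRight?, ⟨d, ⟨⟨hv, _, hd₁.symm⟩, _, hd₂.symm⟩, rfl⟩, ?_, ?_⟩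
    · rw [← filterMap_getRight?_leftTrack, hd₁, filterMap_getRight?_blockCode]
    · rw [← filterMap_getRight?_rightTrack, hd₂, filterMap_getRight?_blockCode]

section WordProblem

variable {A B : Type}

theorem toList_freeSemigroupToWord (w : FreeSemigroup A) :
    (freeSemigroupToWord w).toList = w.head :: w.tail := by
  induction w using FreeSemigroup.recOnMul with
  | ih1 a => rfl
  | ih2 a w _ ih => rw [map_mul, FreeMonoid.toList_mul, ih]; rfl

theorem freeSemigroupToWord_injective : Function.Injective (freeSemigroupToWord (A := A)) := by
  intro w w' h
  have := congrArg FreeMonoid.toList h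
  rw [toList_freeSemigroupToWord, toList_freeSemigroupToWord, List.cons.injEq] at this
  exact FreeSemigroup.ext this.1 this.2

theorem freeSemigroupToWord_ne_one (w : FreeSemigroup A) : freeSemigroupToWord w ≠ 1 := by
  intro h
  have := congrArg FreeMonoid.toList h
  simp [toList_freeSemigroupToWord] at this

theorem exists_freeSemigroupToWord_eq {x : FreeMonoid A} (hx : x ≠ 1) :
    ∃ w, freeSemigroupToWord w = x := by
  obtain ⟨a, l, h⟩ := List.exists_cons_of_ne_nil (FreeMonoid.toList.injective.ne hx)
  exact ⟨⟨a, l⟩, FreeMonoid.toList.injective ((toList_freeSemigroupToWord ⟨a, l⟩).trans h.symm)⟩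

theorem map_freeSemigroupToWord {r : B → FreeSemigroup A} {φ : FreeMonoid B →* FreeMonoid A}
    (hφ : ∀ b, φ (.of b) = freeSemigroupToWord (r b)) (w : FreeSemigroup B) :
    φ (freeSemigroupToWord w) = freeSemigroupToWord (FreeSemigroup.lift r w) := by
  induction w using FreeSemigroup.recOnMul with
  | ih1 b => exact hφ b
  | ih2 b w ihb ih => simp only [map_mul, ihb, ih]

theorem FreeSemigroup.lift_lift {S : Type} [Semigroup S] (f : A → S) (r : B → FreeSemigroup A)
    (w : FreeSemigroup B) :
    FreeSemigroup.lift (fun b => FreeSemigroup.lift f (r b)) w =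
      FreeSemigroup.lift f (FreeSemigroup.lift r w) := by
  induction w using FreeSemigroup.recOnMul with
  | ih1 b => rfl
  | ih2 b w ihb ih => rw [map_mul, map_mul, map_mul, ihb, ih]

theorem wordProblem_lift_comp_eq_preimage {S : Type} [Semigroup S] (f : A → S)
    {r : B → FreeSemigroup A} {φ : FreeMonoid B →* FreeMonoid A}
    (hφ : ∀ b, φ (.of b) = freeSemigroupToWord (r b)) :
    wordProblem (fun b => FreeSemigroup.lift f (r b)) = Prod.map φ φ ⁻¹' wordProblem f := by
  ext ⟨x, y⟩
  constructor
  · rintro ⟨w₁, w₂, h, hxy⟩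
    simp only [Prod.mk.injEq] at hxy
    obtain ⟨rfl, rfl⟩ := hxy
    refine ⟨_, _, ?_, by rw [Prod.map, map_freeSemigroupToWord hφ, map_freeSemigroupToWord hφ]⟩
    rwa [FreeSemigroup.lift_lift, FreeSemigroup.lift_lift] at h
  · rintro ⟨v₁, v₂, h, hxy⟩
    simp only [Prod.map, Prod.mk.injEq] at hxy
    obtain ⟨hx, hy⟩ := hxy
    obtain ⟨w₁, rfl⟩ := exists_freeSemigroupToWord_eq (x := x) fun h =>
      freeSemigroupToWord_ne_one v₁ (by rw [← hx, h, map_one])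
    obtain ⟨w₂, rfl⟩ := exists_freeSemigroupToWord_eq (x := y) fun h =>
      freeSemigroupToWord_ne_one v₂ (by rw [← hy, h, map_one])
    rw [map_freeSemigroupToWord hφ] at hx hy
    refine ⟨w₁, w₂, ?_, rfl⟩
    rw [FreeSemigroup.lift_lift, FreeSemigroup.lift_lift, freeSemigroupToWord_injective hx,
      freeSemigroupToWord_injective hy, h]

end WordProblem

theorem wordProblem_rational_independent_of_generating_set_general (S : Type) [Semigroup S]
    (A : Type) (f : A → S)
    (hf : Function.Surjective ⇑(FreeSemigroup.lift f))
    (hA : IsRationalRel (wordProblem f))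
    (B : Type) [Fintype B] (g : B → S) :
    IsRationalRel (wordProblem g) := by
  choose r hr using hf
  have hg : g = fun b => FreeSemigroup.lift f (r (g b)) := funext fun b => (hr (g b)).symm
  let φ : FreeMonoid B →* FreeMonoid A := FreeMonoid.lift fun b => freeSemigroupToWord (r (g b))
  rw [hg, wordProblem_lift_comp_eq_preimage f (φ := φ) fun _ => rfl]
  exact hA.preimage_prodMap _

/-- Having rational word problem is independent of the choice of finite generating
set: if the word problem of `S` is rational with respect to some finite generating
set, then it is rational with respect to every finite generating set. -/
theorem wordProblem_rational_independent_of_generating_set (S : Type) [Semigroup S]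
    (A : Type) [Fintype A] (f : A → S)
    (hf : Function.Surjective ⇑(FreeSemigroup.lift f))
    (hA : IsRationalRel (wordProblem f))
    (B : Type) [Fintype B] (g : B → S)
    (hg : Function.Surjective ⇑(FreeSemigroup.lift g)) :
    IsRationalRel (wordProblem g) :=
  wordProblem_rational_independent_of_generating_set_general S A f hf hA B g
end

section
/- The multiplication (-l, n, m)·(-l', n', m') = (min(-l, m - l'), min(n, m + n'), m + m') on the set F = {(-l, n, m) : l, n ∈ ℕ, m ∈ ℤ, 0 < n + l, -l ≤ m ≤ n} is well defined (F is closed under it) and associative, and the resulting semigroup F is an inverse semigroup: every element of F has a unique inverse. -/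
/-- Membership in Preston's model `F` of the free monogenic inverse semigroup:
triples `(-l, n, m)` with `l, n ∈ ℕ`, `m ∈ ℤ`, `0 < n + l` and `-l ≤ m ≤ n`. -/
def InF (p : ℤ × ℤ × ℤ) : Prop :=
  p.1 ≤ 0 ∧ 0 ≤ p.2.1 ∧ p.1 < p.2.1 ∧ p.1 ≤ p.2.2 ∧ p.2.2 ≤ p.2.1

/-- The multiplication of Preston's model `F`:
`(-l, n, m)·(-l', n', m') = ((-l) ∧ (m - l'), n ∨ (m + n'), m + m')`, where the
first coordinate is the meet (min) and the second the join (max). -/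
def pmul (p q : ℤ × ℤ × ℤ) : ℤ × ℤ × ℤ :=
  (min p.1 (p.2.2 + q.1), max p.2.1 (p.2.2 + q.2.1), p.2.2 + q.2.2)

/-- Preston's model `F` is well defined: the set `F` is closed under the
multiplication `pmul`, the multiplication is associative on `F`, and the resulting
semigroup is an inverse semigroup (every element has a unique inverse). -/
theorem prestonF_is_inverse_semigroup :
    (∀ p q : ℤ × ℤ × ℤ, InF p → InF q → InF (pmul p q)) ∧
    (∀ p q r : ℤ × ℤ × ℤ, InF p → InF q → InF r →
      pmul (pmul p q) r = pmul p (pmul q r)) ∧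
    (∀ p : ℤ × ℤ × ℤ, InF p →
      ∃! q : ℤ × ℤ × ℤ, InF q ∧ pmul (pmul p q) p = p ∧ pmul (pmul q p) q = q) := by
  refine ⟨?_, ?_, ?_⟩
  · rintro ⟨a, b, m⟩ ⟨c, d, k⟩ hp hq
    simp only [InF, pmul] at *
    omega
  · rintro ⟨a, b, m⟩ ⟨c, d, k⟩ ⟨e, f, l⟩ _ _ _
    simp only [pmul, Prod.mk.injEq]
    refine ⟨?_, ?_, ?_⟩ <;> omega
  · rintro ⟨a, b, m⟩ hp
    simp only [InF] at hp
    refine ⟨(a - m, b - m, -m), ⟨?_, ?_, ?_⟩, ?_⟩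
    · simp only [InF]; omega
    · simp only [pmul, Prod.mk.injEq]; refine ⟨?_, ?_, ?_⟩ <;> omega
    · simp only [pmul, Prod.mk.injEq]; refine ⟨?_, ?_, ?_⟩ <;> omega
    · rintro ⟨x, y, z⟩ ⟨hq, h1, h2⟩
      simp only [InF, pmul, Prod.mk.injEq] at hq h1 h2 ⊢
      refine ⟨?_, ?_, ?_⟩ <;> omega
end
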